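/- arXiv:2411.04564 — 4 statements merged into one kernel-verified Lean document; each statement's English description precedes it below -/
import Mathlib

section
/- For integers l ≥ 2 and d ≥ 2, with τ = l·d + 1, we have (1 - 1/l + d)·(1 - 1/l)^(τ-1) < 1, equivalently 1 - (1 - 1/l)^τ - d·(1 - 1/l)^(τ-1) > 0. -/
/-!
Write `x = 1 - 1/l`. Since `x ^ l ≤ exp (-1) < 1/2`, we get `x ^ (l d) < 2⁻ᵈ`, and then
`(x + d) x ^ (l d) < (1 + d) 2⁻ᵈ ≤ 1` because `d + 1 ≤ 2 ^ d`.
The second inequality is the first one rewritten, as `x ^ τ = x · x ^ (τ - 1)`.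
-/

open Real

theorem one_sub_inv_pow_lt_half {n : ℕ} (hn : 1 ≤ n) : (1 - 1 / (n : ℝ)) ^ n < 1 / 2 := by
  have hexp : (1 - 1 / (n : ℝ)) ^ n ≤ exp (-1) :=
    one_sub_div_pow_le_exp_neg (by exact_mod_cast hn)
  have htwo : 2 < exp 1 := by linarith [add_one_lt_exp (one_ne_zero (α := ℝ))]
  calc (1 - 1 / (n : ℝ)) ^ n ≤ exp (-1) := hexp
    _ = (exp 1)⁻¹ := exp_neg 1
    _ < 1 / 2 := by rw [one_div]; exact inv_strictAnti₀ two_pos htwo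

theorem add_mul_pow_mul_lt_one {x : ℝ} (hx0 : 0 < x) (hx1 : x < 1) {l : ℕ}
    (hxl : x ^ l ≤ 1 / 2) (d : ℕ) : (x + d) * x ^ (l * d) < 1 := by
  have hpow : x ^ (l * d) ≤ (1 / 2) ^ d := by
    rw [pow_mul]; exact pow_le_pow_left₀ (pow_nonneg hx0.le l) hxl d
  have hsucc : (d : ℝ) + 1 ≤ 2 ^ d := by exact_mod_cast Nat.lt_two_pow_self
  calc (x + d) * x ^ (l * d) < (1 + d) * x ^ (l * d) := by gcongr
    _ ≤ (1 + d) * (1 / 2) ^ d := by gcongr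
    _ ≤ 2 ^ d * (1 / 2) ^ d := by gcongr; linarith
    _ = 1 := by rw [← mul_pow]; norm_num

theorem stmt0_general (l d : ℕ) (hl : 2 ≤ l) (τ : ℕ) (hτ : τ = l * d + 1) :
    (1 - 1 / (l : ℝ) + (d : ℝ)) * (1 - 1 / (l : ℝ)) ^ (τ - 1) < 1 ∧
    0 < 1 - (1 - 1 / (l : ℝ)) ^ τ - (d : ℝ) * (1 - 1 / (l : ℝ)) ^ (τ - 1) := by
  obtain rfl : τ = l * d + 1 := hτ
  set x : ℝ := 1 - 1 / (l : ℝ)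
  have hl' : (2 : ℝ) ≤ l := by exact_mod_cast hl
  have hx0 : 0 < x := by
    have : 1 / (l : ℝ) ≤ 1 / 2 := one_div_le_one_div_of_le two_pos hl'
    linarith
  have hx1 : x < 1 := by
    have : 0 < 1 / (l : ℝ) := by positivity
    linarith
  have hmain := add_mul_pow_mul_lt_one hx0 hx1 (one_sub_inv_pow_lt_half (by omega)).le d
  rw [Nat.add_sub_cancel, pow_succ]
  exact ⟨hmain, by linarith⟩

/-- For integers `l ≥ 2` and `d ≥ 2`, with `τ = l·d + 1`,
`(1 - 1/l + d)·(1 - 1/l)^(τ-1) < 1`, equivalently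
`1 - (1 - 1/l)^τ - d·(1 - 1/l)^(τ-1) > 0`. -/
theorem stmt0 (l d : ℕ) (hl : 2 ≤ l) (hd : 2 ≤ d) (τ : ℕ) (hτ : τ = l * d + 1) :
    (1 - 1 / (l : ℝ) + (d : ℝ)) * (1 - 1 / (l : ℝ)) ^ (τ - 1) < 1 ∧
    0 < 1 - (1 - 1 / (l : ℝ)) ^ τ - (d : ℝ) * (1 - 1 / (l : ℝ)) ^ (τ - 1) :=
  stmt0_general l d hl τ hτ
end

section
/- Let l ≥ 2 be an integer, 0 < ε < 1/e, d ≥ max(⌈1/ε⌉, 2) an integer, and τ = l·d + 1. Then d + 1 > (1/e - (1-1/l)^(τ-1)) / (ε - (1-1/l)^(τ-1)·(1 - 1/e + ε)), where the denominator is positive. -/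
/-! Write `x = (1 - 1/l)^(l d) ≤ e^{-d}`, so that `(d + 1) x < 1`. With `c = 1 - 1/e + ε > 0`
this gives `(d + 1)(ε - x c) > (d + 1) ε - c = d ε - 1 + 1/e ≥ 1/e`, using `d ε ≥ 1`; both
claims follow at once. -/

open Real

theorem one_sub_one_div_pow_mul_le_exp_neg {l : ℕ} (hl : 0 < l) (d : ℕ) :
    (1 - 1 / (l : ℝ)) ^ (l * d) ≤ exp (-d) := by
  calc (1 - 1 / (l : ℝ)) ^ (l * d) = ((1 - 1 / (l : ℝ)) ^ l) ^ d := pow_mul _ _ _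
    _ ≤ exp (-1) ^ d := by
      gcongr
      · exact pow_nonneg (Nat.one_sub_one_div_cast_nonneg l) l
      · exact one_sub_div_pow_le_exp_neg (by exact_mod_cast hl)
    _ = exp (-d) := by rw [← exp_nat_mul]; ring_nf

theorem succ_mul_one_sub_one_div_pow_mul_lt_one {l d : ℕ} (hl : 0 < l) (hd : 0 < d) :
    ((d : ℝ) + 1) * (1 - 1 / (l : ℝ)) ^ (l * d) < 1 := by
  have hexp : (d : ℝ) + 1 < exp d := add_one_lt_exp (by positivity)
  calc ((d : ℝ) + 1) * (1 - 1 / (l : ℝ)) ^ (l * d) ≤ ((d : ℝ) + 1) * exp (-d) := by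
        gcongr
        exact one_sub_one_div_pow_mul_le_exp_neg hl d
    _ < exp d * exp (-d) := by gcongr
    _ = 1 := by rw [← exp_add, add_neg_cancel, exp_zero]

theorem lt_succ_mul_sub_mul {a d ε x : ℝ} (hx : (d + 1) * x < 1) (hdε : 1 ≤ d * ε)
    (hc : 0 < 1 - a + ε) :
    a < (d + 1) * (ε - x * (1 - a + ε)) := by
  have : (d + 1) * x * (1 - a + ε) < 1 - a + ε := by nlinarith
  nlinarith

theorem stmt3_general (l d : ℕ) (ε : ℝ) (hl : 2 ≤ l) (hε0 : 0 < ε)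
    (hd : max ⌈1 / ε⌉₊ 2 ≤ d) (τ : ℕ) (hτ : τ = l * d + 1) :
    0 < ε - (1 - 1 / (l : ℝ)) ^ (τ - 1) * (1 - 1 / Real.exp 1 + ε) ∧
    (1 / Real.exp 1 - (1 - 1 / (l : ℝ)) ^ (τ - 1)) /
      (ε - (1 - 1 / (l : ℝ)) ^ (τ - 1) * (1 - 1 / Real.exp 1 + ε)) < (d : ℝ) + 1 := by
  obtain ⟨hceil, hd2⟩ := max_le_iff.mp hd
  have hdε : 1 ≤ (d : ℝ) * ε := by
    rw [← div_le_iff₀ hε0]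
    exact Nat.ceil_le.mp hceil
  have hc : 0 < 1 - 1 / exp 1 + ε := by
    have : 1 / exp 1 < 1 := (div_lt_one (exp_pos 1)).mpr (one_lt_exp_iff.mpr one_pos)
    linarith
  rw [show τ - 1 = l * d by omega]
  have hx0 : 0 ≤ (1 - 1 / (l : ℝ)) ^ (l * d) := pow_nonneg (Nat.one_sub_one_div_cast_nonneg l) _
  have key := lt_succ_mul_sub_mul
    (succ_mul_one_sub_one_div_pow_mul_lt_one (l := l) (d := d) (by omega) (by omega)) hdε hc
  have hD : 0 < ε - (1 - 1 / (l : ℝ)) ^ (l * d) * (1 - 1 / exp 1 + ε) :=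
    pos_of_mul_pos_right ((one_div_pos.mpr (exp_pos 1)).trans key) (by positivity)
  refine ⟨hD, ?_⟩
  rw [div_lt_iff₀ hD]
  linarith

/-- Let `l ≥ 2` be an integer, `0 < ε < 1/e`, `d ≥ max(⌈1/ε⌉, 2)` an integer, and
`τ = l·d + 1`. Then `d + 1 > (1/e - (1-1/l)^(τ-1)) / (ε - (1-1/l)^(τ-1)·(1-1/e+ε))`,
where the denominator is positive. -/
theorem stmt3 (l d : ℕ) (ε : ℝ) (hl : 2 ≤ l) (hε0 : 0 < ε) (hε1 : ε < 1 / Real.exp 1)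
    (hd : max ⌈1 / ε⌉₊ 2 ≤ d) (τ : ℕ) (hτ : τ = l * d + 1) :
    0 < ε - (1 - 1 / (l : ℝ)) ^ (τ - 1) * (1 - 1 / Real.exp 1 + ε) ∧
    (1 / Real.exp 1 - (1 - 1 / (l : ℝ)) ^ (τ - 1)) /
      (ε - (1 - 1 / (l : ℝ)) ^ (τ - 1) * (1 - 1 / Real.exp 1 + ε)) < (d : ℝ) + 1 :=
  stmt3_general l d ε hl hε0 hd τ hτ
end

section
/- Let l ≥ 2, d ≥ 2, τ = l·d + 1 be integers, k, am, mc real numbers with am ≤ k + mc + d·mc and am ≥ k + mc·(1 - (1-1/l)^τ) + d·mc·(1 - (1-1/l)^(τ-1)). Set D := 1 - (1-1/l)^τ + d·(1 - (1-1/l)^(τ-1)). Then (1 - (1-1/l)^(τ-1))·(am - k)/D < mc ≤ (am - k)/D (the strict inequality holding when am > k). -/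
/-!
Write `x = 1 - 1/l ∈ (0, 1)`, `a = 1 - x^τ`, `b = 1 - x^(τ-1)`, so `D = a + d·b` and `0 ≤ b < a`.
The lower bound on `am` reads `mc·D ≤ am - k`, which is the upper bound on `mc`. The upper bound
on `am` gives `b·(am - k) ≤ mc·(b + d·b)`, and `b < a` makes this strictly smaller than `mc·D`
as soon as `mc > 0`, which `k < am` forces.
-/

section

variable {a b d k am mc : ℝ}

theorem le_div_of_add_mul_le (ha : 0 < a) (hb : 0 ≤ b) (hd : 0 ≤ d)
    (h : k + mc * a + d * mc * b ≤ am) : mc ≤ (am - k) / (a + d * b) := by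
  rw [le_div_iff₀ (by positivity)]
  linarith [show mc * (a + d * b) = mc * a + d * mc * b by ring]

theorem mul_div_lt_of_le_add_mul (hb : 0 ≤ b) (hba : b < a) (hd : 0 ≤ d)
    (hub : am ≤ k + mc + d * mc) (hk : k < am) : b * (am - k) / (a + d * b) < mc := by
  have hmc : 0 < mc := by nlinarith
  rw [div_lt_iff₀ (by nlinarith)]
  calc b * (am - k) ≤ b * (mc * (1 + d)) := by gcongr; linarith
    _ = mc * (b + d * b) := by ring
    _ < mc * (a + d * b) := by gcongr

end

theorem one_sub_pow_pred_lt_one_sub_pow {x : ℝ} (hx₀ : 0 < x) (hx₁ : x < 1) {n : ℕ} (hn : 0 < n) :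
    1 - x ^ (n - 1) < 1 - x ^ n := by
  have := pow_lt_pow_right_of_lt_one₀ hx₀ hx₁ (Nat.sub_one_lt_of_lt hn)
  linarith

theorem one_sub_one_div_mem_Ioo {l : ℝ} (hl : 2 ≤ l) : 1 - 1 / l ∈ Set.Ioo 0 1 := by
  have h : 1 / l ≤ 1 / 2 := one_div_le_one_div_of_le two_pos hl
  constructor <;> linarith [one_div_pos.mpr (show (0 : ℝ) < l by linarith)]

theorem stmt4_general (l d τ : ℕ) (hl : 2 ≤ l) (hτ : τ = l * d + 1)
    (k am mc : ℝ)
    (hub : am ≤ k + mc + (d : ℝ) * mc)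
    (hlb : k + mc * (1 - (1 - 1 / (l : ℝ)) ^ τ)
        + (d : ℝ) * mc * (1 - (1 - 1 / (l : ℝ)) ^ (τ - 1)) ≤ am) :
    mc ≤ (am - k) / (1 - (1 - 1 / (l : ℝ)) ^ τ
        + (d : ℝ) * (1 - (1 - 1 / (l : ℝ)) ^ (τ - 1))) ∧
    (k < am →
      (1 - (1 - 1 / (l : ℝ)) ^ (τ - 1)) * (am - k) /
        (1 - (1 - 1 / (l : ℝ)) ^ τ + (d : ℝ) * (1 - (1 - 1 / (l : ℝ)) ^ (τ - 1))) < mc) := by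
  obtain ⟨hx₀, hx₁⟩ := one_sub_one_div_mem_Ioo (show (2 : ℝ) ≤ l by exact_mod_cast hl)
  have hba := one_sub_pow_pred_lt_one_sub_pow hx₀ hx₁ (show 0 < τ by omega)
  have hb : 0 ≤ 1 - (1 - 1 / (l : ℝ)) ^ (τ - 1) := sub_nonneg.mpr (pow_le_one₀ hx₀.le hx₁.le)
  have hd : (0 : ℝ) ≤ d := d.cast_nonneg
  exact ⟨le_div_of_add_mul_le (hb.trans_lt hba) hb hd hlb,
    mul_div_lt_of_le_add_mul hb hba hd hub⟩

/-- Lemma relating the adoption-maximisation value `am` and maximum-coverage value `mc`: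
with `D = 1 - (1-1/l)^τ + d·(1 - (1-1/l)^(τ-1))`,
`(1 - (1-1/l)^(τ-1))·(am-k)/D < mc ≤ (am-k)/D`
(the strict inequality holding when `am > k`, with `mc` nonnegative). -/
theorem stmt4 (l d τ : ℕ) (hl : 2 ≤ l) (hd : 2 ≤ d) (hτ : τ = l * d + 1)
    (k am mc : ℝ) (hmc : 0 ≤ mc)
    (hub : am ≤ k + mc + (d : ℝ) * mc)
    (hlb : k + mc * (1 - (1 - 1 / (l : ℝ)) ^ τ)
        + (d : ℝ) * mc * (1 - (1 - 1 / (l : ℝ)) ^ (τ - 1)) ≤ am) :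
    mc ≤ (am - k) / (1 - (1 - 1 / (l : ℝ)) ^ τ
        + (d : ℝ) * (1 - (1 - 1 / (l : ℝ)) ^ (τ - 1))) ∧
    (k < am →
      (1 - (1 - 1 / (l : ℝ)) ^ (τ - 1)) * (am - k) /
        (1 - (1 - 1 / (l : ℝ)) ^ τ + (d : ℝ) * (1 - (1 - 1 / (l : ℝ)) ^ (τ - 1))) < mc) :=
  stmt4_general l d τ hl hτ k am mc hub hlb
end

section
/- In a strongly connected directed graph with period γ, for any fixed vertex v and any two vertices x, y: γ divides μ(v,x) - μ(v,y) if and only if γ divides μ(x,y), where μ denotes directed shortest-path distance. In other words, the relation ∼_v (congruence of distances from v modulo γ) coincides with the relation ∼ (distance divisible by γ). -/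
/-! The closed walk `v → x → y → v` through shortest paths has length
`μ(v,x) + μ(x,y) + μ(y,v) ≡ 0 (mod γ)`; taking `x = y` gives `μ(v,y) + μ(y,v) ≡ 0`,
and subtracting the two congruences leaves `μ(v,x) - μ(v,y) ≡ -μ(x,y)`. -/

/-- `DWalk E n u v`: there is a directed walk of length `n` from `u` to `v`. -/
def DWalk {V : Type*} (E : V → V → Prop) : ℕ → V → V → Prop
  | 0, u, v => u = v
  | n + 1, u, v => ∃ w, E u w ∧ DWalk E n w v

/-- Directed shortest-path distance. -/
noncomputable def ddist {V : Type*} (E : V → V → Prop) (u v : V) : ℕ :=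
  sInf {n | DWalk E n u v}

section

variable {V : Type*} {E : V → V → Prop}

theorem DWalk.append : ∀ {m n : ℕ} {u v w : V},
    DWalk E m u v → DWalk E n v w → DWalk E (m + n) u w
  | 0, _, _, _, _, rfl, h => by simpa using h
  | m + 1, n, _, _, _, ⟨z, hz, h₁⟩, h₂ => by
    rw [Nat.succ_add]
    exact ⟨z, hz, h₁.append h₂⟩

theorem dwalk_ddist {u v : V} (h : ∃ n, DWalk E n u v) : DWalk E (ddist E u v) u v :=
  Nat.sInf_mem h

theorem ddist_self (v : V) : ddist E v v = 0 :=
  Nat.sInf_eq_zero.mpr (Or.inl rfl)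

theorem dvd_ddist_add_ddist_add_ddist {γ : ℕ} (hsc : ∀ u v : V, ∃ n, DWalk E n u v)
    (hγ : ∀ (u : V) (n : ℕ), 0 < n → DWalk E n u u → γ ∣ n) (a b c : V) :
    γ ∣ ddist E a b + ddist E b c + ddist E c a := by
  have hcycle := ((dwalk_ddist (hsc a b)).append (dwalk_ddist (hsc b c))).append
    (dwalk_ddist (hsc c a))
  rcases Nat.eq_zero_or_pos (ddist E a b + ddist E b c + ddist E c a) with h | h
  · exact h ▸ dvd_zero γ
  · exact hγ a _ h hcycle

end

theorem dvd_sub_iff_of_dvd_add_add {R : Type*} [CommRing R] {g a b c e : R}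
    (h₁ : g ∣ a + c + e) (h₂ : g ∣ b + e) : g ∣ a - b ↔ g ∣ c := by
  rw [show a - b = (a + c + e) - (b + e) - c by ring, dvd_sub_right (dvd_sub h₁ h₂)]

theorem stmt9_general {V : Type*} (E : V → V → Prop) (γ : ℕ)
    (hsc : ∀ u v : V, ∃ n, DWalk E n u v)
    (hγ : ∀ (u : V) (n : ℕ), 0 < n → DWalk E n u u → γ ∣ n) :
    ∀ v x y : V, ((γ : ℤ) ∣ (ddist E v x : ℤ) - (ddist E v y : ℤ)) ↔ γ ∣ ddist E x y := by
  intro v x y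
  have hvxy := Int.natCast_dvd_natCast.mpr (dvd_ddist_add_ddist_add_ddist hsc hγ v x y)
  have hvyy := Int.natCast_dvd_natCast.mpr (dvd_ddist_add_ddist_add_ddist hsc hγ v y y)
  rw [ddist_self, add_zero] at hvyy
  push_cast at hvxy hvyy
  rw [dvd_sub_iff_of_dvd_add_add hvxy hvyy, Int.natCast_dvd_natCast]

/-- In a strongly connected directed graph with period `γ` (gcd of all cycle lengths),
for any fixed vertex `v` and vertices `x, y`: `γ ∣ μ(v,x) - μ(v,y)` iff `γ ∣ μ(x,y)`;
i.e. the relations `∼_v` and `∼` coincide. -/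
theorem stmt9 {V : Type*} [Fintype V] (E : V → V → Prop) (γ : ℕ) (hγpos : 0 < γ)
    (hsc : ∀ u v : V, ∃ n, DWalk E n u v)
    (hγ : ∀ (u : V) (n : ℕ), 0 < n → DWalk E n u u → γ ∣ n) :
    ∀ v x y : V, ((γ : ℤ) ∣ (ddist E v x : ℤ) - (ddist E v y : ℤ)) ↔ γ ∣ ddist E x y :=
  stmt9_general E γ hsc hγ
end
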